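/- arXiv:2306.05299 — 2 statements merged into one kernel-verified Lean document; each statement's English description precedes it below -/
import Mathlib

section
/- Under the stated assumptions, the third moment of the autoregressive coefficient is identified from the first four autocorrelations of first differences: E(φ³) = (1 + 2ρ₁ + 2ρ₂ + 2ρ₃ + ρ₄)/(1 + ρ₁). -/
/-!
With `w = (1 - φ) / (1 + φ)` one has `w φ^k + w φ^(k+1) = (1 - φ) φ^k`, so the sum of two
consecutive autocorrelations `ρ_(k+1) + ρ_(k+2)` is `(E φ^(k+1) - E φ^k) / (2 E[1/(1+φ)])`,
while `w = 2/(1+φ) - 1` gives `1 + ρ₁ = 1 / (2 E[1/(1+φ)])`. Summing over `k < n` telescopes to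
`E φ^n = (1 + ρ₁ + ∑_(k<n) (ρ_(k+1) + ρ_(k+2))) / (1 + ρ₁)`; the case `n = 3` is the claim.
The bounds on `φ` make every integrand bounded and `E[1/(1+φ)] ≥ 1/2`.
-/

open MeasureTheory Finset

lemma abs_one_sub_div_one_add_mul_pow_le {ε x : ℝ} (hε : 0 < ε) (hlow : -1 + ε ≤ x)
    (hup : x ≤ 1) (k : ℕ) : |(1 - x) / (1 + x) * x ^ k| ≤ 2 / ε := by
  have hpos : 0 < 1 + x := by linarith
  have hpow : |x| ^ k ≤ 1 := pow_le_one₀ (abs_nonneg x) (abs_le.2 ⟨by linarith, hup⟩)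
  rw [abs_mul, abs_pow, abs_div, abs_of_pos hpos, abs_of_nonneg (by linarith : 0 ≤ 1 - x)]
  calc (1 - x) / (1 + x) * |x| ^ k ≤ (1 - x) / (1 + x) * 1 := by gcongr
    _ ≤ 2 / ε := by rw [mul_one]; gcongr <;> linarith

section

variable {Ω : Type*} [MeasurableSpace Ω] {P : Measure Ω} {φ : Ω → ℝ} {ε₀ : ℝ}

variable (P φ) in
/-- The paper's `ρ_h`, meaningful for `h ≥ 1`. -/
noncomputable def diffAutocorr (h : ℕ) : ℝ :=
  -(∫ ω, ((1 - φ ω) / (1 + φ ω)) * φ ω ^ (h - 1) ∂P) / (2 * ∫ ω, 1 / (1 + φ ω) ∂P)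

lemma integrable_one_div_one_add [IsFiniteMeasure P] (hφ : AEMeasurable φ P) (hε₀ : 0 < ε₀)
    (hlow : ∀ᵐ ω ∂P, -1 + ε₀ ≤ φ ω) : Integrable (fun ω ↦ 1 / (1 + φ ω)) P := by
  refine .of_bound (aemeasurable_const.div (aemeasurable_const.add hφ)).aestronglyMeasurable
    (1 / ε₀) ?_
  filter_upwards [hlow] with ω hω
  have hpos : 0 < 1 + φ ω := by linarith
  rw [Real.norm_of_nonneg (one_div_pos.2 hpos).le]
  gcongr
  linarith

lemma integrable_pow_of_abs_le_one [IsFiniteMeasure P] (hφ : AEMeasurable φ P)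
    (hbd : ∀ᵐ ω ∂P, |φ ω| ≤ 1) (k : ℕ) : Integrable (fun ω ↦ φ ω ^ k) P := by
  refine .of_bound (by fun_prop) 1 ?_
  filter_upwards [hbd] with ω hω
  rw [norm_pow, Real.norm_eq_abs]
  exact pow_le_one₀ (abs_nonneg _) hω

lemma integrable_one_sub_div_one_add_mul_pow [IsFiniteMeasure P] (hφ : AEMeasurable φ P)
    (hε₀ : 0 < ε₀) (hφbd : ∀ᵐ ω ∂P, -1 + ε₀ ≤ φ ω ∧ φ ω ≤ 1) (k : ℕ) :
    Integrable (fun ω ↦ (1 - φ ω) / (1 + φ ω) * φ ω ^ k) P := by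
  refine .of_bound (by fun_prop) (2 / ε₀) ?_
  filter_upwards [hφbd] with ω ⟨hlow, hup⟩
  exact abs_one_sub_div_one_add_mul_pow_le hε₀ hlow hup k

lemma integral_one_sub_div_one_add [IsProbabilityMeasure P] (hφ : AEMeasurable φ P)
    (hε₀ : 0 < ε₀) (hlow : ∀ᵐ ω ∂P, -1 + ε₀ ≤ φ ω) :
    ∫ ω, (1 - φ ω) / (1 + φ ω) ∂P = 2 * ∫ ω, 1 / (1 + φ ω) ∂P - 1 := by
  have hint := integrable_one_div_one_add hφ hε₀ hlow
  calc ∫ ω, (1 - φ ω) / (1 + φ ω) ∂P = ∫ ω, (2 * (1 / (1 + φ ω)) - 1) ∂P := by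
        refine integral_congr_ae ?_
        filter_upwards [hlow] with ω hω
        have : 1 + φ ω ≠ 0 := by linarith
        field_simp
        ring
    _ = 2 * ∫ ω, 1 / (1 + φ ω) ∂P - 1 := by
        rw [integral_sub (hint.const_mul 2) (integrable_const 1), integral_const_mul]
        simp

lemma half_le_integral_one_div_one_add [IsProbabilityMeasure P] (hφ : AEMeasurable φ P)
    (hε₀ : 0 < ε₀) (hφbd : ∀ᵐ ω ∂P, -1 + ε₀ ≤ φ ω ∧ φ ω ≤ 1) :
    1 / 2 ≤ ∫ ω, 1 / (1 + φ ω) ∂P := by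
  have hint := integrable_one_div_one_add hφ hε₀ (hφbd.mono fun _ h ↦ h.1)
  calc (1 / 2 : ℝ) = ∫ _, 1 / 2 ∂P := by simp
    _ ≤ ∫ ω, 1 / (1 + φ ω) ∂P := by
      refine integral_mono_ae (integrable_const _) hint ?_
      filter_upwards [hφbd] with ω ⟨hlow, hup⟩
      gcongr <;> linarith

lemma integral_one_sub_div_one_add_mul_pow_add_succ [IsFiniteMeasure P] (hφ : AEMeasurable φ P)
    (hε₀ : 0 < ε₀) (hφbd : ∀ᵐ ω ∂P, -1 + ε₀ ≤ φ ω ∧ φ ω ≤ 1) (k : ℕ) :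
    ∫ ω, (1 - φ ω) / (1 + φ ω) * φ ω ^ k ∂P + ∫ ω, (1 - φ ω) / (1 + φ ω) * φ ω ^ (k + 1) ∂P =
      ∫ ω, φ ω ^ k ∂P - ∫ ω, φ ω ^ (k + 1) ∂P := by
  have habs : ∀ᵐ ω ∂P, |φ ω| ≤ 1 := hφbd.mono fun _ h ↦ abs_le.2 ⟨by linarith, h.2⟩
  rw [← integral_add (integrable_one_sub_div_one_add_mul_pow hφ hε₀ hφbd k)
      (integrable_one_sub_div_one_add_mul_pow hφ hε₀ hφbd (k + 1)),
    ← integral_sub (integrable_pow_of_abs_le_one hφ habs k)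
      (integrable_pow_of_abs_le_one hφ habs (k + 1))]
  refine integral_congr_ae ?_
  filter_upwards [hφbd] with ω ⟨hlow, _⟩
  have : 1 + φ ω ≠ 0 := by linarith
  field_simp
  ring

lemma one_add_diffAutocorr_one [IsProbabilityMeasure P] (hφ : AEMeasurable φ P)
    (hε₀ : 0 < ε₀) (hφbd : ∀ᵐ ω ∂P, -1 + ε₀ ≤ φ ω ∧ φ ω ≤ 1) :
    1 + diffAutocorr P φ 1 = 1 / (2 * ∫ ω, 1 / (1 + φ ω) ∂P) := by
  have hD := half_le_integral_one_div_one_add hφ hε₀ hφbd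
  rw [diffAutocorr, Nat.sub_self]
  simp only [pow_zero, mul_one]
  rw [integral_one_sub_div_one_add hφ hε₀ (hφbd.mono fun _ h ↦ h.1)]
  field_simp
  ring

lemma diffAutocorr_add_diffAutocorr_succ [IsFiniteMeasure P] (hφ : AEMeasurable φ P)
    (hε₀ : 0 < ε₀) (hφbd : ∀ᵐ ω ∂P, -1 + ε₀ ≤ φ ω ∧ φ ω ≤ 1) (k : ℕ) :
    diffAutocorr P φ (k + 1) + diffAutocorr P φ (k + 2) =
      (∫ ω, φ ω ^ (k + 1) ∂P - ∫ ω, φ ω ^ k ∂P) / (2 * ∫ ω, 1 / (1 + φ ω) ∂P) := by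
  simp only [diffAutocorr, Nat.add_sub_cancel, Nat.add_succ_sub_one]
  rw [← add_div, ← neg_add, integral_one_sub_div_one_add_mul_pow_add_succ hφ hε₀ hφbd k, neg_sub]

theorem integral_pow_eq_diffAutocorr [IsProbabilityMeasure P] (hφ : AEMeasurable φ P)
    (hε₀ : 0 < ε₀) (hφbd : ∀ᵐ ω ∂P, -1 + ε₀ ≤ φ ω ∧ φ ω ≤ 1) (n : ℕ) :
    ∫ ω, φ ω ^ n ∂P = (1 + diffAutocorr P φ 1 +
      ∑ k ∈ range n, (diffAutocorr P φ (k + 1) + diffAutocorr P φ (k + 2))) /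
        (1 + diffAutocorr P φ 1) := by
  have hD := half_le_integral_one_div_one_add hφ hε₀ hφbd
  simp only [one_add_diffAutocorr_one hφ hε₀ hφbd,
    diffAutocorr_add_diffAutocorr_succ hφ hε₀ hφbd, ← sum_div,
    sum_range_sub (fun k ↦ ∫ ω, φ ω ^ k ∂P), pow_zero, integral_const, probReal_univ, one_smul]
  field_simp
  ring

end

/-- The third moment of the autoregressive coefficient is identified from the first four
autocorrelations of first differences: `E(φ³) = (1 + 2ρ₁ + 2ρ₂ + 2ρ₃ + ρ₄)/(1 + ρ₁)`. -/
theorem third_moment_identified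
    {Ω : Type*} [MeasurableSpace Ω] (P : Measure Ω) [IsProbabilityMeasure P]
    (φ : Ω → ℝ) (hφm : Measurable φ) (ε₀ : ℝ) (hε₀ : 0 < ε₀)
    (hφbd : ∀ᵐ ω ∂P, -1 + ε₀ ≤ φ ω ∧ φ ω ≤ 1)
    (ρ : ℕ → ℝ)
    (hρ : ∀ h : ℕ, 1 ≤ h → ρ h =
      -(∫ ω, ((1 - φ ω) / (1 + φ ω)) * φ ω ^ (h - 1) ∂P) /
        (2 * ∫ ω, 1 / (1 + φ ω) ∂P)) :
    ∫ ω, (φ ω) ^ 3 ∂P = (1 + 2 * ρ 1 + 2 * ρ 2 + 2 * ρ 3 + ρ 4) / (1 + ρ 1) := by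
  have hρ' (k : ℕ) : ρ (k + 1) = diffAutocorr P φ (k + 1) := hρ (k + 1) k.succ_pos
  rw [integral_pow_eq_diffAutocorr hφm.aemeasurable hε₀ hφbd 3, hρ' 0, hρ' 1, hρ' 2, hρ' 3]
  simp only [sum_range_succ, sum_range_zero]
  ring
end

section
/- (Moment condition underlying the HetroGMM estimator of the second moment) Under the stated assumptions, for every t ∈ ℤ, E(φ²) · (E((Δy_t)²) + E(Δy_t Δy_{t−1})) = E((Δy_t)²) + 2 E(Δy_t Δy_{t−1}) + 2 E(Δy_t Δy_{t−2}) + E(Δy_t Δy_{t−3}). -/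
/-!
Conditionally on `(φ, σ) = (x, s)`, `Δy` is a moving average of the uncorrelated errors with
coefficients `c₀ = s`, `cⱼ = -s (1 - x) x ^ (j - 1)`, so `E(Δy_t Δy_{t-k}) = E(γ_k(φ, σ))` with
`γ_k = ∑ⱼ c_{j+k} cⱼ`. For the truncated series, `γ₀ + γ₁ = s² - s² (1 - x) x ^ e` and
`γ₀ + 2γ₁ + 2γ₂ + γ₃ = s² x² - s² (1 - x³) x ^ e'` exactly; the remainders vanish in the limit by
dominated convergence (either `|x| < 1`, or `x = 1` and they are zero), while the truncations
converge to `Δy` in `L²`. Hence `γ₀ + γ₁ = E(σ²)` and `γ₀ + 2γ₁ + 2γ₂ + γ₃ = E(σ² φ²)`, and the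
independence of `φ` and `σ` gives `E(σ² φ²) = E(φ²) E(σ²)`.
-/

open MeasureTheory ProbabilityTheory Filter

/-- Index type for the joint independence assumption: `none` indexes the pair of
random coefficients `(φ, σ)` and `some ℓ` indexes the standardized error `ε_ℓ`. -/
abbrev HetAR1.Codomain : Option ℤ → Type
  | none => ℝ × ℝ
  | some _ => ℝ

instance HetAR1.instMeasurableSpaceCodomain : ∀ i, MeasurableSpace (HetAR1.Codomain i)
  | none => inferInstanceAs (MeasurableSpace (ℝ × ℝ))
  | some _ => inferInstanceAs (MeasurableSpace ℝ)

/-- The family consisting of the pair `(φ, σ)` together with all the errors `ε_ℓ`. -/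
def HetAR1.family {Ω : Type*} (φ σ : Ω → ℝ) (ε : ℤ → Ω → ℝ) :
    ∀ i : Option ℤ, Ω → HetAR1.Codomain i
  | none => fun ω => (φ ω, σ ω)
  | some ℓ => ε ℓ

open Finset Topology
open scoped ENNReal

lemma sum_range_sum_range_ite_eq_add {β : Type*} [AddCommMonoid β] (f : ℕ → ℕ → β) (k n : ℕ) :
    ∑ j ∈ range n, ∑ j' ∈ range n, (if j = j' + k then f j j' else 0)
      = ∑ j ∈ range (n - k), f (j + k) j := by
  rw [sum_comm]
  simp only [sum_ite_eq', mem_range]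
  rw [← sum_filter]
  congr 1
  ext j
  simp only [mem_filter, mem_range]
  omega

section

variable {Ω : Type*} [MeasurableSpace Ω] {P : Measure Ω}

lemma real_inner_toLp_toLp {u v : Ω → ℝ} (hu : MemLp u 2 P) (hv : MemLp v 2 P) :
    inner ℝ (hu.toLp u) (hv.toLp v) = ∫ ω, u ω * v ω ∂P := by
  rw [L2.inner_def]
  refine integral_congr_ae ?_
  filter_upwards [hu.coeFn_toLp, hv.coeFn_toLp] with ω hu' hv'
  rw [hu', hv', RCLike.inner_apply, conj_trivial, mul_comm]

lemma tendsto_toLp_of_tendsto_eLpNorm {E : Type*} [NormedAddCommGroup E] {p : ℝ≥0∞}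
    [Fact (1 ≤ p)] {ι : Type*} {l : Filter ι} {u : ι → Ω → E} {U : Ω → E}
    (hu : ∀ i, MemLp (u i) p P) (hU : MemLp U p P)
    (h : Tendsto (fun i => eLpNorm (u i - U) p P) l (𝓝 0)) :
    Tendsto (fun i => (hu i).toLp (u i)) l (𝓝 (hU.toLp U)) := by
  rw [tendsto_iff_norm_sub_tendsto_zero]
  refine ((ENNReal.tendsto_toReal ENNReal.zero_ne_top).comp h).congr fun i => ?_
  rw [Function.comp_apply, ← MemLp.toLp_sub, Lp.norm_toLp]

lemma tendsto_integral_mul_of_tendsto_eLpNorm {ι : Type*} {l : Filter ι} {f g : ι → Ω → ℝ}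
    {F G : Ω → ℝ} (hf : ∀ i, MemLp (f i) 2 P) (hg : ∀ i, MemLp (g i) 2 P) (hF : MemLp F 2 P)
    (hG : MemLp G 2 P) (hfF : Tendsto (fun i => eLpNorm (f i - F) 2 P) l (𝓝 0))
    (hgG : Tendsto (fun i => eLpNorm (g i - G) 2 P) l (𝓝 0)) :
    Tendsto (fun i => ∫ ω, f i ω * g i ω ∂P) l (𝓝 (∫ ω, F ω * G ω ∂P)) := by
  have h := (tendsto_toLp_of_tendsto_eLpNorm hf hF hfF).inner (𝕜 := ℝ)
    (tendsto_toLp_of_tendsto_eLpNorm hg hG hgG)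
  simpa only [real_inner_toLp_toLp] using h

lemma tendsto_integral_sub_mul_mul_pow {f g h φ : Ω → ℝ} {K : ℝ} (hh : Integrable h P)
    (hf : Integrable f P) (hg : AEStronglyMeasurable g P) (hφ : AEStronglyMeasurable φ P)
    (hφ1 : ∀ᵐ ω ∂P, φ ω ∈ Set.Ioc (-1) 1) (hgK : ∀ᵐ ω ∂P, |g ω| ≤ K)
    (hg1 : ∀ᵐ ω ∂P, φ ω = 1 → g ω = 0) :
    Tendsto (fun n : ℕ => ∫ ω, (h ω - f ω * (g ω * φ ω ^ n)) ∂P) atTop (𝓝 (∫ ω, h ω ∂P)) := by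
  refine tendsto_integral_of_dominated_convergence (fun ω => |h ω| + K * |f ω|)
    (fun n => hh.1.sub (hf.1.mul (hg.mul (hφ.pow n)))) (hh.abs.add (hf.abs.const_mul K))
    (fun n => ?_) ?_
  · filter_upwards [hφ1, hgK] with ω hφω hgω
    have hpow : |φ ω| ^ n ≤ 1 := pow_le_one₀ (abs_nonneg _) (abs_le.2 ⟨hφω.1.le, hφω.2⟩)
    have hgφ : |g ω| * |φ ω| ^ n ≤ K := by
      nlinarith [abs_nonneg (g ω), pow_nonneg (abs_nonneg (φ ω)) n]
    rw [Real.norm_eq_abs]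
    calc |h ω - f ω * (g ω * φ ω ^ n)| ≤ |h ω| + |f ω| * (|g ω| * |φ ω| ^ n) := by
          simpa only [abs_mul, abs_pow] using abs_sub (h ω) (f ω * (g ω * φ ω ^ n))
      _ ≤ |h ω| + K * |f ω| := by nlinarith [abs_nonneg (f ω)]
  · filter_upwards [hφ1, hg1] with ω hφω hgω
    rcases hφω.2.eq_or_lt with hφ_eq | hφ_lt
    · simp [hgω hφ_eq]
    · have hpow := tendsto_pow_atTop_nhds_zero_of_abs_lt_one (abs_lt.2 ⟨hφω.1, hφ_lt⟩)
      simpa using tendsto_const_nhds.sub ((hpow.const_mul (g ω)).const_mul (f ω))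

end

namespace HetAR1

/-- `Δy t = ∑ j, maCoeff j φ σ * ε (t - j)`: the moving-average coefficients of `Δy`. -/
def maCoeff : ℕ → ℝ → ℝ → ℝ
  | 0, _, s => s
  | j + 1, x, s => -(s * (1 - x) * x ^ j)

@[simp] lemma maCoeff_zero (x s : ℝ) : maCoeff 0 x s = s := rfl

lemma maCoeff_succ (j : ℕ) (x s : ℝ) : maCoeff (j + 1) x s = -(s * (1 - x) * x ^ j) := rfl

/-- Lag-`k` autocovariance of the `n`-term truncation of that moving average, conditionally on
`(φ, σ) = (x, s)`. -/
def maAutocov (k n : ℕ) (x s : ℝ) : ℝ :=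
  ∑ j ∈ range (n - k), maCoeff (j + k) x s * maCoeff j x s

lemma maAutocov_add_one {k n : ℕ} (h : k ≤ n) (x s : ℝ) :
    maAutocov k (n + 1) x s = maAutocov k n x s + maCoeff n x s * maCoeff (n - k) x s := by
  rw [maAutocov, Nat.sub_add_comm h, sum_range_succ, Nat.sub_add_cancel h, maAutocov]

lemma maAutocov_zero_add_maAutocov_one (N : ℕ) (x s : ℝ) :
    maAutocov 0 (N + 2) x s + maAutocov 1 (N + 2) x s
      = s ^ 2 - s ^ 2 * ((1 - x) * x ^ (2 * N + 1)) := by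
  induction N with
  | zero =>
    simp only [maAutocov, Nat.reduceAdd, Nat.reduceSub, sum_range_succ, sum_range_zero,
      maCoeff_zero, maCoeff_succ]
    ring
  | succ N ih =>
    rw [maAutocov_add_one (by omega : 0 ≤ N + 2), maAutocov_add_one (by omega : 1 ≤ N + 2)]
    simp only [Nat.sub_zero, show N + 2 - 1 = N + 1 by omega, maCoeff_succ]
    linear_combination ih

lemma maAutocov_combination (N : ℕ) (x s : ℝ) :
    maAutocov 0 (N + 4) x s + 2 * maAutocov 1 (N + 4) x s + 2 * maAutocov 2 (N + 4) x s
        + maAutocov 3 (N + 4) x s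
      = s ^ 2 * x ^ 2 - s ^ 2 * ((1 - x ^ 3) * x ^ (2 * N + 3)) := by
  induction N with
  | zero =>
    simp only [maAutocov, Nat.reduceAdd, Nat.reduceSub, sum_range_succ, sum_range_zero,
      maCoeff_zero, maCoeff_succ]
    ring
  | succ N ih =>
    rw [maAutocov_add_one (by omega : 0 ≤ N + 4), maAutocov_add_one (by omega : 1 ≤ N + 4),
      maAutocov_add_one (by omega : 2 ≤ N + 4), maAutocov_add_one (by omega : 3 ≤ N + 4)]
    simp only [Nat.sub_zero, show N + 4 - 1 = N + 3 by omega, show N + 4 - 2 = N + 2 by omega,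
      show N + 4 - 3 = N + 1 by omega, maCoeff_succ]
    linear_combination ih

variable {Ω : Type*} {φ σ : Ω → ℝ} {ε : ℤ → Ω → ℝ}

def maTrunc (φ σ : Ω → ℝ) (ε : ℤ → Ω → ℝ) (t : ℤ) (n : ℕ) (ω : Ω) : ℝ :=
  ∑ j ∈ range n, maCoeff j (φ ω) (σ ω) * ε (t - j) ω

lemma maTrunc_succ (t : ℤ) (M : ℕ) :
    maTrunc φ σ ε t (M + 1) = fun ω => σ ω * (ε t ω -
      (1 - φ ω) * ∑ ℓ ∈ range M, φ ω ^ ℓ * ε (t - ((ℓ : ℤ) + 1)) ω) := by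
  funext ω
  have hterm : ∀ ℓ : ℕ, maCoeff (ℓ + 1) (φ ω) (σ ω) * ε (t - ((ℓ + 1 : ℕ) : ℤ)) ω
      = -(σ ω * (1 - φ ω) * (φ ω ^ ℓ * ε (t - ((ℓ : ℤ) + 1)) ω)) := fun ℓ => by
    rw [maCoeff_succ]; push_cast; ring
  rw [maTrunc, sum_range_succ', sum_congr rfl fun ℓ _ => hterm ℓ, sum_neg_distrib, ← mul_sum,
    maCoeff_zero, Nat.cast_zero, sub_zero]
  ring

variable [MeasurableSpace Ω] {P : Measure Ω}

lemma aemeasurable_family (hφ : Measurable φ) (hσ : Measurable σ)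
    (hε : ∀ ℓ, MemLp (ε ℓ) 2 P) : ∀ i, AEMeasurable (family φ σ ε i) P
  | none => (hφ.prodMk hσ).aemeasurable
  | some ℓ => (hε ℓ).aestronglyMeasurable.aemeasurable

lemma indepFun_noise (hindep : iIndepFun (family φ σ ε) P) {a b : ℤ} (hab : a ≠ b) :
    IndepFun (ε a) (ε b) P :=
  hindep.indepFun (i := some a) (j := some b) (by simpa using hab)

lemma indepFun_pair_noise_mul (hindep : iIndepFun (family φ σ ε) P) (hφ : Measurable φ)
    (hσ : Measurable σ) (hε : ∀ ℓ, MemLp (ε ℓ) 2 P) (a b : ℤ) :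
    IndepFun (fun ω => (φ ω, σ ω)) (fun ω => ε a ω * ε b ω) P := by
  rcases eq_or_ne a b with rfl | hab
  · exact (hindep.indepFun (i := none) (j := some a) (by simp)).comp measurable_id
      (measurable_id.mul measurable_id)
  · exact (hindep.indepFun_prodMk₀ (aemeasurable_family hφ hσ hε) (some a) (some b) none
      (by simp) (by simp)).symm.comp measurable_id (measurable_fst.mul measurable_snd)

lemma integrable_noise_mul [IsFiniteMeasure P] (hindep : iIndepFun (family φ σ ε) P)
    (hε : ∀ ℓ, MemLp (ε ℓ) 2 P) (a b : ℤ) : Integrable (fun ω => ε a ω * ε b ω) P := by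
  rcases eq_or_ne a b with rfl | hab
  · simpa only [sq] using (hε a).integrable_sq
  · exact (indepFun_noise hindep hab).integrable_mul ((hε a).integrable one_le_two)
      ((hε b).integrable one_le_two)

lemma integral_noise_mul [IsProbabilityMeasure P] (hindep : iIndepFun (family φ σ ε) P)
    (hε : ∀ ℓ, MemLp (ε ℓ) 2 P) (hmean : ∀ ℓ, ∫ ω, ε ℓ ω ∂P = 0)
    (hvar : ∀ ℓ, ∫ ω, ε ℓ ω ^ 2 ∂P = 1) (a b : ℤ) :
    ∫ ω, ε a ω * ε b ω ∂P = if a = b then 1 else 0 := by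
  rcases eq_or_ne a b with rfl | hab
  · simpa only [sq, if_true] using hvar a
  · rw [if_neg hab, (indepFun_noise hindep hab).integral_fun_mul_eq_mul_integral
      (hε a).aestronglyMeasurable (hε b).aestronglyMeasurable, hmean, zero_mul]

lemma integrable_comp_mul_noise_mul [IsFiniteMeasure P] (hindep : iIndepFun (family φ σ ε) P)
    (hφ : Measurable φ) (hσ : Measurable σ) (hε : ∀ ℓ, MemLp (ε ℓ) 2 P) {g : ℝ × ℝ → ℝ}
    (hg : Measurable g) (hgi : Integrable (fun ω => g (φ ω, σ ω)) P) (a b : ℤ) :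
    Integrable (fun ω => g (φ ω, σ ω) * (ε a ω * ε b ω)) P :=
  ((indepFun_pair_noise_mul hindep hφ hσ hε a b).comp hg measurable_id).integrable_mul hgi
    (integrable_noise_mul hindep hε a b)

lemma integral_comp_mul_noise_mul [IsProbabilityMeasure P] (hindep : iIndepFun (family φ σ ε) P)
    (hφ : Measurable φ) (hσ : Measurable σ) (hε : ∀ ℓ, MemLp (ε ℓ) 2 P)
    (hmean : ∀ ℓ, ∫ ω, ε ℓ ω ∂P = 0) (hvar : ∀ ℓ, ∫ ω, ε ℓ ω ^ 2 ∂P = 1) {g : ℝ × ℝ → ℝ}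
    (hg : Measurable g) (hgi : Integrable (fun ω => g (φ ω, σ ω)) P) (a b : ℤ) :
    ∫ ω, g (φ ω, σ ω) * (ε a ω * ε b ω) ∂P = if a = b then ∫ ω, g (φ ω, σ ω) ∂P else 0 := by
  have hind : IndepFun (fun ω => g (φ ω, σ ω)) (fun ω => ε a ω * ε b ω) P :=
    (indepFun_pair_noise_mul hindep hφ hσ hε a b).comp hg measurable_id
  rw [hind.integral_fun_mul_eq_mul_integral hgi.1 (integrable_noise_mul hindep hε a b).1,
    integral_noise_mul hindep hε hmean hvar]
  split_ifs <;> simp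

lemma measurable_maCoeff (j : ℕ) : Measurable fun p : ℝ × ℝ => maCoeff j p.1 p.2 := by
  cases j with
  | zero => exact measurable_snd
  | succ j => simp only [maCoeff_succ]; fun_prop

lemma abs_maCoeff_le {x : ℝ} (hx : |x| ≤ 1) (s : ℝ) (j : ℕ) : |maCoeff j x s| ≤ 2 * |s| := by
  cases j with
  | zero => rw [maCoeff_zero]; linarith [abs_nonneg s]
  | succ j =>
    have h1 : |1 - x| ≤ 2 := by rw [abs_le] at hx ⊢; constructor <;> linarith
    have h2 : |x| ^ j ≤ 1 := pow_le_one₀ (abs_nonneg x) hx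
    calc |maCoeff (j + 1) x s| = |s| * |1 - x| * |x| ^ j := by
          rw [maCoeff_succ, abs_neg, abs_mul, abs_mul, abs_pow]
      _ ≤ |s| * 2 * 1 := by gcongr
      _ = 2 * |s| := by ring

lemma integrable_maCoeff_mul (hφ : Measurable φ) (hσ : Measurable σ)
    (hφabs : ∀ᵐ ω ∂P, |φ ω| ≤ 1) (hσ2 : Integrable (fun ω => σ ω ^ 2) P) (j j' : ℕ) :
    Integrable (fun ω => maCoeff j (φ ω) (σ ω) * maCoeff j' (φ ω) (σ ω)) P := by
  refine (hσ2.const_mul 4).mono' ((((measurable_maCoeff j).mul (measurable_maCoeff j')).comp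
    (hφ.prodMk hσ)).aestronglyMeasurable) ?_
  filter_upwards [hφabs] with ω hω
  have h := abs_maCoeff_le hω (σ ω) j
  have h' := abs_maCoeff_le hω (σ ω) j'
  rw [Real.norm_eq_abs, abs_mul]
  nlinarith [abs_nonneg (maCoeff j (φ ω) (σ ω)), sq_abs (σ ω)]

lemma memLp_maTrunc [IsFiniteMeasure P] (hindep : iIndepFun (family φ σ ε) P)
    (hφ : Measurable φ) (hσ : Measurable σ) (hε : ∀ ℓ, MemLp (ε ℓ) 2 P)
    (hφabs : ∀ᵐ ω ∂P, |φ ω| ≤ 1) (hσ2 : Integrable (fun ω => σ ω ^ 2) P) (t : ℤ) (n : ℕ) :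
    MemLp (maTrunc φ σ ε t n) 2 P := by
  refine memLp_finsetSum (range n) fun j _ => ?_
  have hm : AEStronglyMeasurable (fun ω => maCoeff j (φ ω) (σ ω) * ε (t - j) ω) P :=
    ((measurable_maCoeff j).comp (hφ.prodMk hσ)).aestronglyMeasurable.mul (hε _).1
  refine (memLp_two_iff_integrable_sq hm).2 ?_
  refine (integrable_comp_mul_noise_mul hindep hφ hσ hε
    ((measurable_maCoeff j).mul (measurable_maCoeff j)) (integrable_maCoeff_mul hφ hσ hφabs hσ2 j j)
    (t - j) (t - j)).congr (ae_of_all _ fun ω => ?_)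
  simp only [Pi.mul_apply]
  ring

lemma integrable_maAutocov (hφ : Measurable φ) (hσ : Measurable σ)
    (hφabs : ∀ᵐ ω ∂P, |φ ω| ≤ 1) (hσ2 : Integrable (fun ω => σ ω ^ 2) P) (k n : ℕ) :
    Integrable (fun ω => maAutocov k n (φ ω) (σ ω)) P :=
  integrable_finsetSum _ fun j _ => integrable_maCoeff_mul hφ hσ hφabs hσ2 (j + k) j

lemma integral_maTrunc_mul_maTrunc [IsProbabilityMeasure P] (hindep : iIndepFun (family φ σ ε) P)
    (hφ : Measurable φ) (hσ : Measurable σ) (hε : ∀ ℓ, MemLp (ε ℓ) 2 P)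
    (hmean : ∀ ℓ, ∫ ω, ε ℓ ω ∂P = 0) (hvar : ∀ ℓ, ∫ ω, ε ℓ ω ^ 2 ∂P = 1)
    (hφabs : ∀ᵐ ω ∂P, |φ ω| ≤ 1) (hσ2 : Integrable (fun ω => σ ω ^ 2) P) (t : ℤ) (k n : ℕ) :
    ∫ ω, maTrunc φ σ ε t n ω * maTrunc φ σ ε (t - k) n ω ∂P
      = ∫ ω, maAutocov k n (φ ω) (σ ω) ∂P := by
  have hcc := integrable_maCoeff_mul hφ hσ hφabs hσ2
  have hg : ∀ j j', Measurable fun p : ℝ × ℝ => maCoeff j p.1 p.2 * maCoeff j' p.1 p.2 :=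
    fun j j' => (measurable_maCoeff j).mul (measurable_maCoeff j')
  have hterm : ∀ (j j' : ℕ), Integrable (fun ω => maCoeff j (φ ω) (σ ω) * maCoeff j' (φ ω) (σ ω)
      * (ε (t - j) ω * ε (t - k - j') ω)) P :=
    fun j j' => integrable_comp_mul_noise_mul hindep hφ hσ hε (hg j j') (hcc j j') _ _
  calc ∫ ω, maTrunc φ σ ε t n ω * maTrunc φ σ ε (t - k) n ω ∂P
      = ∫ ω, ∑ j ∈ range n, ∑ j' ∈ range n, maCoeff j (φ ω) (σ ω) * maCoeff j' (φ ω) (σ ω)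
          * (ε (t - j) ω * ε (t - k - j') ω) ∂P := by
        refine integral_congr_ae (ae_of_all _ fun ω => ?_)
        simp only [maTrunc, sum_mul_sum]
        exact sum_congr rfl fun _ _ => sum_congr rfl fun _ _ => by ring
    _ = ∑ j ∈ range n, ∑ j' ∈ range n, ∫ ω, maCoeff j (φ ω) (σ ω) * maCoeff j' (φ ω) (σ ω)
          * (ε (t - j) ω * ε (t - k - j') ω) ∂P := by
        rw [integral_finsetSum _ fun j _ => integrable_finsetSum _ fun j' _ => hterm j j']
        exact sum_congr rfl fun j _ => integral_finsetSum _ fun j' _ => hterm j j'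
    _ = ∑ j ∈ range n, ∑ j' ∈ range n, if j = j' + k then
          ∫ ω, maCoeff j (φ ω) (σ ω) * maCoeff j' (φ ω) (σ ω) ∂P else 0 :=
        sum_congr rfl fun j _ => sum_congr rfl fun j' _ =>
          (integral_comp_mul_noise_mul hindep hφ hσ hε hmean hvar (hg j j') (hcc j j') _ _).trans
            (if_congr (by omega) rfl rfl)
    _ = ∫ ω, maAutocov k n (φ ω) (σ ω) ∂P := by
        rw [sum_range_sum_range_ite_eq_add]
        exact (integral_finsetSum _ fun j _ => hcc (j + k) j).symm

lemma tendsto_integral_maAutocov [IsProbabilityMeasure P] (hindep : iIndepFun (family φ σ ε) P)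
    (hφ : Measurable φ) (hσ : Measurable σ) (hε : ∀ ℓ, MemLp (ε ℓ) 2 P)
    (hmean : ∀ ℓ, ∫ ω, ε ℓ ω ∂P = 0) (hvar : ∀ ℓ, ∫ ω, ε ℓ ω ^ 2 ∂P = 1)
    (hφabs : ∀ᵐ ω ∂P, |φ ω| ≤ 1) (hσ2 : Integrable (fun ω => σ ω ^ 2) P) {Δy : ℤ → Ω → ℝ}
    (hΔ2 : ∀ t, MemLp (Δy t) 2 P)
    (hΔlim : ∀ t, Tendsto (fun M : ℕ => eLpNorm (maTrunc φ σ ε t (M + 1) - Δy t) 2 P) atTop (𝓝 0))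
    (t : ℤ) (k : ℕ) :
    Tendsto (fun M : ℕ => ∫ ω, maAutocov k (M + 1) (φ ω) (σ ω) ∂P) atTop
      (𝓝 (∫ ω, Δy t ω * Δy (t - k) ω ∂P)) := by
  have h := tendsto_integral_mul_of_tendsto_eLpNorm
    (fun M => memLp_maTrunc hindep hφ hσ hε hφabs hσ2 t (M + 1))
    (fun M => memLp_maTrunc hindep hφ hσ hε hφabs hσ2 (t - k) (M + 1)) (hΔ2 t) (hΔ2 (t - k))
    (hΔlim t) (hΔlim (t - k))
  simpa only [integral_maTrunc_mul_maTrunc hindep hφ hσ hε hmean hvar hφabs hσ2] using h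

lemma integral_mul_add_integral_mul_lag_one [IsProbabilityMeasure P]
    (hindep : iIndepFun (family φ σ ε) P) (hφ : Measurable φ) (hσ : Measurable σ)
    (hε : ∀ ℓ, MemLp (ε ℓ) 2 P) (hmean : ∀ ℓ, ∫ ω, ε ℓ ω ∂P = 0)
    (hvar : ∀ ℓ, ∫ ω, ε ℓ ω ^ 2 ∂P = 1) (hφ1 : ∀ᵐ ω ∂P, φ ω ∈ Set.Ioc (-1) 1)
    (hσ2 : Integrable (fun ω => σ ω ^ 2) P) {Δy : ℤ → Ω → ℝ} (hΔ2 : ∀ t, MemLp (Δy t) 2 P)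
    (hΔlim : ∀ t, Tendsto (fun M : ℕ => eLpNorm (maTrunc φ σ ε t (M + 1) - Δy t) 2 P) atTop (𝓝 0))
    (t : ℤ) :
    (∫ ω, Δy t ω * Δy t ω ∂P) + ∫ ω, Δy t ω * Δy (t - 1) ω ∂P = ∫ ω, σ ω ^ 2 ∂P := by
  have hφabs : ∀ᵐ ω ∂P, |φ ω| ≤ 1 := hφ1.mono fun ω h => abs_le.2 ⟨h.1.le, h.2⟩
  have hI := integrable_maAutocov hφ hσ hφabs hσ2
  have hγ (k : ℕ) := (tendsto_integral_maAutocov hindep hφ hσ hε hmean hvar hφabs hσ2 hΔ2 hΔlim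
    t k).comp (tendsto_add_atTop_nat 3)
  refine tendsto_nhds_unique (by simpa using (hγ 0).add (hγ 1)) ?_
  refine ((tendsto_integral_sub_mul_mul_pow (g := fun ω => 1 - φ ω) (K := 2) hσ2 hσ2
    (measurable_const.sub hφ).aestronglyMeasurable hφ.aestronglyMeasurable hφ1
    (hφabs.mono fun ω h => by rw [abs_le] at h ⊢; constructor <;> linarith)
    (ae_of_all _ fun ω h => by rw [h, sub_self])).comp
    (tendsto_atTop_mono (fun N => show N ≤ 2 * (N + 2) + 1 by omega) tendsto_id)).congr fun N => ?_
  rw [Function.comp_apply, ← integral_congr_ae (ae_of_all _ fun ω =>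
    maAutocov_zero_add_maAutocov_one (N + 2) (φ ω) (σ ω)), integral_add]
  all_goals fun_prop

lemma integral_lag_combination [IsProbabilityMeasure P]
    (hindep : iIndepFun (family φ σ ε) P) (hφ : Measurable φ) (hσ : Measurable σ)
    (hε : ∀ ℓ, MemLp (ε ℓ) 2 P) (hmean : ∀ ℓ, ∫ ω, ε ℓ ω ∂P = 0)
    (hvar : ∀ ℓ, ∫ ω, ε ℓ ω ^ 2 ∂P = 1) (hφ1 : ∀ᵐ ω ∂P, φ ω ∈ Set.Ioc (-1) 1)
    (hσ2 : Integrable (fun ω => σ ω ^ 2) P) {Δy : ℤ → Ω → ℝ} (hΔ2 : ∀ t, MemLp (Δy t) 2 P)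
    (hΔlim : ∀ t, Tendsto (fun M : ℕ => eLpNorm (maTrunc φ σ ε t (M + 1) - Δy t) 2 P) atTop (𝓝 0))
    (t : ℤ) :
    (∫ ω, Δy t ω * Δy t ω ∂P) + 2 * (∫ ω, Δy t ω * Δy (t - 1) ω ∂P)
      + 2 * (∫ ω, Δy t ω * Δy (t - 2) ω ∂P) + ∫ ω, Δy t ω * Δy (t - 3) ω ∂P
      = ∫ ω, σ ω ^ 2 * φ ω ^ 2 ∂P := by
  have hφabs : ∀ᵐ ω ∂P, |φ ω| ≤ 1 := hφ1.mono fun ω h => abs_le.2 ⟨h.1.le, h.2⟩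
  have hI := integrable_maAutocov hφ hσ hφabs hσ2
  have hγ (k : ℕ) := (tendsto_integral_maAutocov hindep hφ hσ hε hmean hvar hφabs hσ2 hΔ2 hΔlim
    t k).comp (tendsto_add_atTop_nat 3)
  have hσφ : Integrable (fun ω => σ ω ^ 2 * φ ω ^ 2) P :=
    hσ2.mul_bdd (hφ.pow_const 2).aestronglyMeasurable (c := 1) (hφabs.mono fun ω h => by
      rw [Real.norm_eq_abs, abs_pow]; exact pow_le_one₀ (abs_nonneg _) h)
  have hlim := (((hγ 0).add ((hγ 1).const_mul 2)).add ((hγ 2).const_mul 2)).add (hγ 3)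
  refine tendsto_nhds_unique (by simpa using hlim) ?_
  refine ((tendsto_integral_sub_mul_mul_pow (g := fun ω => 1 - φ ω ^ 3) (K := 2) hσφ hσ2
    (measurable_const.sub (hφ.pow_const 3)).aestronglyMeasurable hφ.aestronglyMeasurable hφ1
    (hφabs.mono fun ω h => ?_) (ae_of_all _ fun ω h => by rw [h, one_pow, sub_self])).comp
    (tendsto_atTop_mono (fun N => show N ≤ 2 * N + 3 by omega) tendsto_id)).congr fun N => ?_
  · have h3 : |φ ω ^ 3| ≤ 1 := by rw [abs_pow]; exact pow_le_one₀ (abs_nonneg _) h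
    rw [abs_le] at h3 ⊢; constructor <;> linarith
  rw [Function.comp_apply, ← integral_congr_ae (ae_of_all _ fun ω =>
    maAutocov_combination N (φ ω) (σ ω)), integral_add, integral_add, integral_add,
    integral_const_mul, integral_const_mul]
  all_goals fun_prop

end HetAR1

theorem hetroGMM_moment_condition_second_general
    {Ω : Type*} [MeasurableSpace Ω] (P : Measure Ω) [IsProbabilityMeasure P]
    (φ σ : Ω → ℝ) (ε : ℤ → Ω → ℝ) (ε₀ : ℝ) (hε₀ : 0 < ε₀)
    (hφm : Measurable φ) (hφbd : ∀ᵐ ω ∂P, -1 + ε₀ ≤ φ ω ∧ φ ω ≤ 1)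
    (hσm : Measurable σ)
    (hσ2 : Integrable (fun ω => (σ ω) ^ 2) P)
    (hε2 : ∀ ℓ : ℤ, MemLp (ε ℓ) 2 P)
    (hεmean : ∀ ℓ : ℤ, ∫ ω, ε ℓ ω ∂P = 0)
    (hεvar : ∀ ℓ : ℤ, ∫ ω, (ε ℓ ω) ^ 2 ∂P = 1)
    (hindep : iIndepFun (HetAR1.family φ σ ε) P)
    (hφσ : IndepFun φ σ P)
    (Δy : ℤ → Ω → ℝ)
    (hΔ2 : ∀ t : ℤ, MemLp (Δy t) 2 P)
    (hΔL2 : ∀ t : ℤ, Tendsto (fun M : ℕ =>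
        eLpNorm (fun ω => σ ω * (ε t ω -
          (1 - φ ω) * ∑ ℓ ∈ Finset.range M, φ ω ^ ℓ * ε (t - ((ℓ : ℤ) + 1)) ω)
          - Δy t ω) 2 P)
      atTop (nhds 0)) :
    ∀ t : ℤ,
      (∫ ω, (φ ω) ^ 2 ∂P) *
          ((∫ ω, (Δy t ω) ^ 2 ∂P) + ∫ ω, Δy t ω * Δy (t - 1) ω ∂P) =
        (∫ ω, (Δy t ω) ^ 2 ∂P) + 2 * (∫ ω, Δy t ω * Δy (t - 1) ω ∂P) +
          2 * (∫ ω, Δy t ω * Δy (t - 2) ω ∂P) + ∫ ω, Δy t ω * Δy (t - 3) ω ∂P := by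
  intro t
  have hφ1 : ∀ᵐ ω ∂P, φ ω ∈ Set.Ioc (-1) 1 := hφbd.mono fun ω h => ⟨by linarith [h.1], h.2⟩
  have hΔlim (t : ℤ) :
      Tendsto (fun M : ℕ => eLpNorm (HetAR1.maTrunc φ σ ε t (M + 1) - Δy t) 2 P) atTop (𝓝 0) := by
    simp only [HetAR1.maTrunc_succ]
    exact hΔL2 t
  have hfact : ∫ ω, σ ω ^ 2 * φ ω ^ 2 ∂P = (∫ ω, φ ω ^ 2 ∂P) * ∫ ω, σ ω ^ 2 ∂P := by
    have hind : IndepFun (fun ω => σ ω ^ 2) (fun ω => φ ω ^ 2) P :=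
      hφσ.symm.comp (measurable_id.pow_const 2) (measurable_id.pow_const 2)
    rw [hind.integral_fun_mul_eq_mul_integral hσ2.1 (hφm.pow_const 2).aestronglyMeasurable,
      mul_comm]
  simp only [sq (Δy t _)]
  rw [HetAR1.integral_mul_add_integral_mul_lag_one hindep hφm hσm hε2 hεmean hεvar hφ1 hσ2 hΔ2
    hΔlim t, HetAR1.integral_lag_combination hindep hφm hσm hε2 hεmean hεvar hφ1 hσ2 hΔ2 hΔlim t,
    hfact]

/-- (Moment condition underlying the HetroGMM estimator of the second moment)
For every `t ∈ ℤ`, `E(φ²) (E((Δy_t)²) + E(Δy_t Δy_{t−1}))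
  = E((Δy_t)²) + 2 E(Δy_t Δy_{t−1}) + 2 E(Δy_t Δy_{t−2}) + E(Δy_t Δy_{t−3})`. -/
theorem hetroGMM_moment_condition_second
    {Ω : Type*} [MeasurableSpace Ω] (P : Measure Ω) [IsProbabilityMeasure P]
    (φ σ : Ω → ℝ) (ε : ℤ → Ω → ℝ) (ε₀ : ℝ) (hε₀ : 0 < ε₀)
    (hφm : Measurable φ) (hφbd : ∀ᵐ ω ∂P, -1 + ε₀ ≤ φ ω ∧ φ ω ≤ 1)
    (hσm : Measurable σ) (hσ0 : ∀ ω, 0 ≤ σ ω)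
    (hσ2 : Integrable (fun ω => (σ ω) ^ 2) P)
    (hε2 : ∀ ℓ : ℤ, MemLp (ε ℓ) 2 P)
    (hεmean : ∀ ℓ : ℤ, ∫ ω, ε ℓ ω ∂P = 0)
    (hεvar : ∀ ℓ : ℤ, ∫ ω, (ε ℓ ω) ^ 2 ∂P = 1)
    (hindep : iIndepFun (HetAR1.family φ σ ε) P)
    (hφσ : IndepFun φ σ P)
    (Δy : ℤ → Ω → ℝ)
    (hΔ2 : ∀ t : ℤ, MemLp (Δy t) 2 P)
    (hΔrep : ∀ t : ℤ, ∀ᵐ ω ∂P,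
      (Summable fun ℓ : ℕ => |φ ω ^ ℓ * ε (t - ((ℓ : ℤ) + 1)) ω|) ∧
      Δy t ω = σ ω * (ε t ω -
        (1 - φ ω) * ∑' ℓ : ℕ, φ ω ^ ℓ * ε (t - ((ℓ : ℤ) + 1)) ω))
    (hΔL2 : ∀ t : ℤ, Tendsto (fun M : ℕ =>
        eLpNorm (fun ω => σ ω * (ε t ω -
          (1 - φ ω) * ∑ ℓ ∈ Finset.range M, φ ω ^ ℓ * ε (t - ((ℓ : ℤ) + 1)) ω)
          - Δy t ω) 2 P)
      atTop (nhds 0)) :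
    ∀ t : ℤ,
      (∫ ω, (φ ω) ^ 2 ∂P) *
          ((∫ ω, (Δy t ω) ^ 2 ∂P) + ∫ ω, Δy t ω * Δy (t - 1) ω ∂P) =
        (∫ ω, (Δy t ω) ^ 2 ∂P) + 2 * (∫ ω, Δy t ω * Δy (t - 1) ω ∂P) +
          2 * (∫ ω, Δy t ω * Δy (t - 2) ω ∂P) + ∫ ω, Δy t ω * Δy (t - 3) ω ∂P :=
  hetroGMM_moment_condition_second_general P φ σ ε ε₀ hε₀ hφm hφbd hσm hσ2 hε2 hεmean hεvar hindep
    hφσ Δy hΔ2 hΔL2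
end
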